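/- Let H be a real inner product space, let x, y, y′ ∈ H, and let 0 < m ≤ M be such that m ≤ ‖y‖ ≤ M and m ≤ ‖y′‖ ≤ M. Then ‖ ⟨x, y⟩ y / ‖y‖² − ⟨x, y′⟩ y′ / ‖y′‖² ‖ ≤ 4 ‖x‖ (M³/m⁴) ‖y − y′‖. -/

import Mathlib

/-!
With `ι y = (‖y‖ ^ 2)⁻¹ • y` the inversion in the unit sphere, the projection of `x` onto `ℝ ∙ y`
is `⟪x, y⟫ • ι y`, so the difference of the two projections splits as
`⟪x, y⟫ • (ι y - ι y') + ⟪x, y - y'⟫ • ι y'`. Inversion scales distances by `1 / (‖y‖ * ‖y'‖)`,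
hence each term is at most `‖x‖ * ‖y - y'‖ / ‖y'‖`.
-/

section

open RealInnerProductSpace

variable {H : Type*} [NormedAddCommGroup H] [InnerProductSpace ℝ H]

theorem norm_inv_norm_sq_smul_sub_inv_norm_sq_smul {y y' : H} (hy : y ≠ 0) (hy' : y' ≠ 0) :
    ‖(‖y‖ ^ 2)⁻¹ • y - (‖y'‖ ^ 2)⁻¹ • y'‖ = ‖y - y'‖ / (‖y‖ * ‖y'‖) := by
  have h := EuclideanGeometry.dist_inversion_inversion hy hy' 1
  simp only [EuclideanGeometry.inversion, dist_eq_norm, vsub_eq_sub, vadd_eq_add, sub_zero,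
    add_zero, one_div, inv_pow] at h
  rw [h]
  ring

theorem norm_inner_div_sq_smul_sub_le (x : H) {y y' : H} (hy : y ≠ 0) (hy' : y' ≠ 0) :
    ‖(⟪x, y⟫ / ‖y‖ ^ 2) • y - (⟪x, y'⟫ / ‖y'‖ ^ 2) • y'‖ ≤ 2 * ‖x‖ * ‖y - y'‖ / ‖y'‖ := by
  have hny : 0 < ‖y‖ := norm_pos_iff.2 hy
  have hny' : 0 < ‖y'‖ := norm_pos_iff.2 hy'
  have hsplit : (⟪x, y⟫ / ‖y‖ ^ 2) • y - (⟪x, y'⟫ / ‖y'‖ ^ 2) • y' =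
      ⟪x, y⟫ • ((‖y‖ ^ 2)⁻¹ • y - (‖y'‖ ^ 2)⁻¹ • y') + ⟪x, y - y'⟫ • (‖y'‖ ^ 2)⁻¹ • y' := by
    rw [inner_sub_right, smul_sub, sub_smul, smul_smul, smul_smul, smul_smul, div_eq_mul_inv,
      div_eq_mul_inv]
    abel
  have hnorm_inversion : ‖(‖y'‖ ^ 2)⁻¹ • y'‖ = ‖y'‖⁻¹ := by
    rw [norm_smul, norm_inv, norm_pow, norm_norm]
    field_simp
  calc _ ≤ |⟪x, y⟫| * (‖y - y'‖ / (‖y‖ * ‖y'‖)) + |⟪x, y - y'⟫| * ‖y'‖⁻¹ := by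
        rw [hsplit, ← norm_inv_norm_sq_smul_sub_inv_norm_sq_smul hy hy', ← hnorm_inversion,
          ← Real.norm_eq_abs, ← Real.norm_eq_abs, ← norm_smul, ← norm_smul]
        exact norm_add_le _ _
    _ ≤ (‖x‖ * ‖y‖) * (‖y - y'‖ / (‖y‖ * ‖y'‖)) + (‖x‖ * ‖y - y'‖) * ‖y'‖⁻¹ := by
        gcongr
        · exact abs_real_inner_le_norm x y
        · exact abs_real_inner_le_norm x (y - y')
    _ = 2 * ‖x‖ * ‖y - y'‖ / ‖y'‖ := by
        field_simp
        ring

end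

theorem stmt_17_general {H : Type*} [NormedAddCommGroup H] [InnerProductSpace ℝ H]
    (x y y' : H) (m M : ℝ) (hm : 0 < m) (hmM : m ≤ M)
    (hy1 : m ≤ ‖y‖) (hy'1 : m ≤ ‖y'‖) :
    ‖((inner ℝ x y : ℝ) / ‖y‖ ^ 2) • y - ((inner ℝ x y' : ℝ) / ‖y'‖ ^ 2) • y'‖ ≤
      4 * ‖x‖ * (M ^ 3 / m ^ 4) * ‖y - y'‖ := by
  have hy : y ≠ 0 := norm_pos_iff.1 (hm.trans_le hy1)
  have hy' : y' ≠ 0 := norm_pos_iff.1 (hm.trans_le hy'1)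
  have hconst : 2 / m ≤ 4 * (M ^ 3 / m ^ 4) := by
    have hm3 : m ^ 3 ≤ M ^ 3 := by gcongr
    calc 2 / m ≤ 4 * (m ^ 3 / m ^ 4) := by
          rw [div_le_iff₀ hm]
          field_simp
          norm_num
      _ ≤ 4 * (M ^ 3 / m ^ 4) := by gcongr
  calc _ ≤ 2 * ‖x‖ * ‖y - y'‖ / ‖y'‖ := norm_inner_div_sq_smul_sub_le x hy hy'
    _ ≤ 2 / m * (‖x‖ * ‖y - y'‖) := by
        rw [div_mul_eq_mul_div, ← mul_assoc]
        gcongr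
    _ ≤ 4 * (M ^ 3 / m ^ 4) * (‖x‖ * ‖y - y'‖) := by gcongr
    _ = 4 * ‖x‖ * (M ^ 3 / m ^ 4) * ‖y - y'‖ := by ring

/-- In a real inner product space, if `0 < m ≤ ‖y‖, ‖y′‖ ≤ M`, then
the projections of `x` onto the spans of `y` and `y′` satisfy
`‖⟨x,y⟩y/‖y‖² − ⟨x,y′⟩y′/‖y′‖²‖ ≤ 4‖x‖(M³/m⁴)‖y − y′‖`. -/
theorem stmt_17 {H : Type*} [NormedAddCommGroup H] [InnerProductSpace ℝ H]
    (x y y' : H) (m M : ℝ) (hm : 0 < m) (hmM : m ≤ M)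
    (hy1 : m ≤ ‖y‖) (hy2 : ‖y‖ ≤ M) (hy'1 : m ≤ ‖y'‖) (hy'2 : ‖y'‖ ≤ M) :
    ‖((inner ℝ x y : ℝ) / ‖y‖ ^ 2) • y - ((inner ℝ x y' : ℝ) / ‖y'‖ ^ 2) • y'‖ ≤
      4 * ‖x‖ * (M ^ 3 / m ^ 4) * ‖y - y'‖ :=
  stmt_17_general x y y' m M hm hmM hy1 hy'1
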